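/- arXiv:2604.00534 — 3 statements merged into one kernel-verified Lean document; each statement's English description precedes it below -/
import Mathlib

section
/- Let (Ω, 𝒫) be a probability space, let K be a positive integer, let α : Fin K → ℝ satisfy 0 < α_k ≤ 1 for every k, and let ε : Fin K → Ω → ℝ be an independent family of random variables each with law gaussianReal 0 1 (the standard real Gaussian). Fix y₀ ∈ ℝ and define the forward diffusion process recursively by Y₀ = y₀ (constant) and Y_{k+1}(ω) = √(α_{k+1}) · Y_k(ω) + √(1 − α_{k+1}) · ε_{k+1}(ω). Then for every k ≤ K, the pushforward law of Y_k under 𝒫 is the Gaussian measure gaussianReal (√(ᾱ_k) · y₀) (1 − ᾱ_k), where ᾱ_k = ∏_{s=1}^{k} α_s. (Closed-form expression of the DDPM forward process.) -/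
/-! By induction on `k`: `Y k` is measurable with respect to the noise `ε i`, `i < k`, hence
independent of `ε k`, so `Y (k + 1)` is a sum of independent Gaussians of variances
`α (1 - ᾱ_k)` and `1 - α`, which add up to `1 - α ᾱ_k`. -/

open MeasureTheory ProbabilityTheory
open scoped NNReal

lemma ProbabilityTheory.iIndepFun.indepFun_of_measurable_biSup {Ω ι β γ : Type*}
    [MeasurableSpace Ω] {P : Measure Ω} [mβ : MeasurableSpace β] [MeasurableSpace γ]
    {ε : ι → Ω → β} (hε : iIndepFun ε P) (hmeas : ∀ i, Measurable (ε i))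
    {S : Set ι} {j : ι} (hj : j ∉ S) {f : Ω → γ}
    (hf : Measurable[⨆ i ∈ S, mβ.comap (ε i)] f) :
    IndepFun f (ε j) P := by
  have h := indep_iSup_of_disjoint (fun i => (hmeas i).comap_le) hε.iIndep
    (Set.disjoint_singleton_right.mpr hj)
  rw [IndepFun_iff_Indep]
  refine indep_of_indep_of_le_right (indep_of_indep_of_le_left h hf.comap_le) ?_
  exact le_iSup₂ (f := fun i (_ : i ∈ ({j} : Set ι)) => mβ.comap (ε i)) j rfl

section Gaussian

variable {Ω : Type*} [MeasurableSpace Ω] {P : Measure Ω}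

lemma map_const_mul_eq_gaussianReal {X : Ω → ℝ} {m : ℝ} {v : ℝ≥0}
    (hX : P.map X = gaussianReal m v) (c : ℝ) :
    P.map (fun ω => c * X ω) = gaussianReal (c * m) (.mk (c ^ 2) (sq_nonneg c) * v) := by
  have hXm : AEMeasurable X P := AEMeasurable.of_map_ne_zero (by simp [hX, NeZero.ne])
  rw [show (fun ω => c * X ω) = (c * ·) ∘ X from rfl,
    ← AEMeasurable.map_map_of_aemeasurable (measurable_const_mul c).aemeasurable hXm, hX,
    gaussianReal_map_const_mul]

lemma map_sqrt_mul_add_sqrt_one_sub_mul_eq_gaussianReal {X Z : Ω → ℝ} (hXZ : IndepFun X Z P)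
    {a b m : ℝ} (ha₀ : 0 ≤ a) (ha₁ : a ≤ 1) (hb : b ≤ 1)
    (hX : P.map X = gaussianReal m (1 - b).toNNReal) (hZ : P.map Z = gaussianReal 0 1) :
    P.map (fun ω => √a * X ω + √(1 - a) * Z ω) = gaussianReal (√a * m) (1 - a * b).toNNReal := by
  have h := gaussianReal_add_gaussianReal_of_indepFun
    (hXZ.comp (measurable_const_mul √a) (measurable_const_mul √(1 - a)))
    (map_const_mul_eq_gaussianReal hX √a) (map_const_mul_eq_gaussianReal hZ √(1 - a))
  convert h using 2
  · rfl
  · ring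
  · ext
    have hb' : 0 ≤ 1 - b := by linarith
    have hab : 0 ≤ 1 - a * b := by nlinarith
    simp [Real.coe_toNNReal _ hb', Real.coe_toNNReal _ hab, Real.sq_sqrt ha₀,
      Real.sq_sqrt (sub_nonneg.mpr ha₁)]
    ring

end Gaussian

lemma Finset.prod_filter_val_lt_succ {M : Type*} [CommMonoid M] {K n : ℕ} (hn : n < K)
    (f : Fin K → M) :
    ∏ s ∈ univ.filter (fun s : Fin K => (s : ℕ) < n + 1), f s =
      f ⟨n, hn⟩ * ∏ s ∈ univ.filter (fun s : Fin K => (s : ℕ) < n), f s := by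
  rw [← Finset.prod_insert (by simp)]
  congr 1
  ext i
  simp only [Finset.mem_filter, Finset.mem_univ, true_and, Finset.mem_insert, Fin.ext_iff]
  omega

lemma measurable_biSup_comap_of_forward_rec {Ω : Type*} [MeasurableSpace Ω] {K : ℕ}
    {α : Fin K → ℝ} {ε : Fin K → Ω → ℝ} {y₀ : ℝ} {Y : ℕ → Ω → ℝ}
    (hY0 : Y 0 = fun _ => y₀)
    (hYrec : ∀ (k : ℕ) (hk : k < K), Y (k + 1) =
      fun ω => Real.sqrt (α ⟨k, hk⟩) * Y k ω + Real.sqrt (1 - α ⟨k, hk⟩) * ε ⟨k, hk⟩ ω)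
    (n : ℕ) (hn : n ≤ K) :
    Measurable[⨆ i ∈ {s : Fin K | (s : ℕ) < n}, MeasurableSpace.comap (ε i) inferInstance]
      (Y n) := by
  induction n with
  | zero => rw [hY0]; exact measurable_const
  | succ n ih =>
    have hnK : n < K := hn
    rw [hYrec n hnK]
    refine Measurable.add (Measurable.const_mul ?_ _) (Measurable.const_mul ?_ _)
    · exact (ih hnK.le).mono (biSup_mono fun i hi => Nat.lt_succ_of_lt hi) le_rfl
    · exact Measurable.of_comap_le
        (le_iSup₂ (f := fun i (_ : i ∈ {s : Fin K | (s : ℕ) < n + 1}) =>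
          MeasurableSpace.comap (ε i) inferInstance) ⟨n, hnK⟩ (by simp))

theorem ddpm_forward_closed_form_general {Ω : Type*} [MeasurableSpace Ω]
    (P : Measure Ω) [IsProbabilityMeasure P]
    (K : ℕ)
    (α : Fin K → ℝ) (hα : ∀ k, 0 < α k ∧ α k ≤ 1)
    (ε : Fin K → Ω → ℝ) (hε_meas : ∀ k, Measurable (ε k))
    (hε_law : ∀ k, Measure.map (ε k) P = gaussianReal 0 1)
    (hε_indep : iIndepFun ε P)
    (y₀ : ℝ) (Y : ℕ → Ω → ℝ)
    (hY0 : Y 0 = fun _ => y₀)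
    (hYrec : ∀ (k : ℕ) (hk : k < K), Y (k + 1) =
      fun ω => Real.sqrt (α ⟨k, hk⟩) * Y k ω + Real.sqrt (1 - α ⟨k, hk⟩) * ε ⟨k, hk⟩ ω)
    (k : ℕ) (hk : k ≤ K) :
    Measure.map (Y k) P =
      gaussianReal
        (Real.sqrt (∏ s ∈ Finset.univ.filter (fun s : Fin K => (s : ℕ) < k), α s) * y₀)
        (Real.toNNReal (1 - ∏ s ∈ Finset.univ.filter (fun s : Fin K => (s : ℕ) < k), α s)) := by
  induction k with
  | zero => simp [hY0]
  | succ n ih =>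
    have hn : n < K := hk
    have hindep : IndepFun (Y n) (ε ⟨n, hn⟩) P :=
      hε_indep.indepFun_of_measurable_biSup hε_meas (by simp)
        (measurable_biSup_comap_of_forward_rec hY0 hYrec n hn.le)
    have hprod_le : ∏ s ∈ Finset.univ.filter (fun s : Fin K => (s : ℕ) < n), α s ≤ 1 :=
      Finset.prod_le_one (fun i _ => (hα i).1.le) (fun i _ => (hα i).2)
    rw [hYrec n hn, Finset.prod_filter_val_lt_succ hn, Real.sqrt_mul (hα _).1.le, mul_assoc]
    exact map_sqrt_mul_add_sqrt_one_sub_mul_eq_gaussianReal hindep (hα _).1.le (hα _).2 hprod_le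
      (ih hn.le) (hε_law _)

/-- **Closed-form expression of the DDPM forward process.**
Let `ε₁, …, ε_K` be an independent family of standard real Gaussian random variables,
`0 < α_k ≤ 1`, and define `Y₀ = y₀` and `Y_{k+1} = √(α_{k+1})·Y_k + √(1 − α_{k+1})·ε_{k+1}`
(here `α` and `ε` are 0-indexed by `Fin K`, so step `k+1` uses index `k`).
Then for every `k ≤ K`, the law of `Y_k` is the Gaussian with mean `√(ᾱ_k)·y₀` and
variance `1 − ᾱ_k`, where `ᾱ_k = ∏_{s=1}^{k} α_s`. -/
theorem ddpm_forward_closed_form {Ω : Type*} [MeasurableSpace Ω]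
    (P : Measure Ω) [IsProbabilityMeasure P]
    (K : ℕ) (hK : 0 < K)
    (α : Fin K → ℝ) (hα : ∀ k, 0 < α k ∧ α k ≤ 1)
    (ε : Fin K → Ω → ℝ) (hε_meas : ∀ k, Measurable (ε k))
    (hε_law : ∀ k, Measure.map (ε k) P = gaussianReal 0 1)
    (hε_indep : iIndepFun ε P)
    (y₀ : ℝ) (Y : ℕ → Ω → ℝ)
    (hY0 : Y 0 = fun _ => y₀)
    (hYrec : ∀ (k : ℕ) (hk : k < K), Y (k + 1) =
      fun ω => Real.sqrt (α ⟨k, hk⟩) * Y k ω + Real.sqrt (1 - α ⟨k, hk⟩) * ε ⟨k, hk⟩ ω)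
    (k : ℕ) (hk : k ≤ K) :
    Measure.map (Y k) P =
      gaussianReal
        (Real.sqrt (∏ s ∈ Finset.univ.filter (fun s : Fin K => (s : ℕ) < k), α s) * y₀)
        (Real.toNNReal (1 - ∏ s ∈ Finset.univ.filter (fun s : Fin K => (s : ℕ) < k), α s)) :=
  ddpm_forward_closed_form_general P K α hα ε hε_meas hε_law hε_indep y₀ Y hY0 hYrec k hk
end

section
/- Let (Ω, 𝒫) be a probability space and let ε₁, ε₂ : Ω → ℝ be independent random variables, each with law gaussianReal 0 1. Let α_k, α_{k−1} ∈ ℝ satisfy 0 < α_k ≤ 1 and 0 < α_{k−1} ≤ 1, and fix y ∈ ℝ. Then the random variable ω ↦ √(α_k) · (√(α_{k−1}) · y + √(1 − α_{k−1}) · ε₁(ω)) + √(1 − α_k) · ε₂(ω) has law gaussianReal (√(α_k · α_{k−1}) · y) (1 − α_k · α_{k−1}). That is, composing two steps of the Gaussian forward diffusion collapses into a single Gaussian step with mean √(α_k α_{k−1}) y and variance 1 − α_k α_{k−1}. -/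
open MeasureTheory ProbabilityTheory
open scoped NNReal

lemma MeasureTheory.hasLaw_of_map_eq {Ω 𝓧 : Type*} [MeasurableSpace Ω] [MeasurableSpace 𝓧]
    {P : Measure Ω} {X : Ω → 𝓧} {μ : Measure 𝓧} [NeZero μ] (h : P.map X = μ) : HasLaw X μ P :=
  ⟨.of_map_ne_zero (h ▸ NeZero.ne μ), h⟩

lemma ProbabilityTheory.IndepFun.map_mul_add_mul_add_eq_gaussianReal {Ω : Type*}
    [MeasurableSpace Ω] {P : Measure Ω} {X Y : Ω → ℝ} {m₁ m₂ : ℝ} {v₁ v₂ : ℝ≥0}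
    (hXY : IndepFun X Y P) (hX : P.map X = gaussianReal m₁ v₁)
    (hY : P.map Y = gaussianReal m₂ v₂) (a b c : ℝ) :
    P.map (fun ω ↦ a * X ω + b * Y ω + c) =
      gaussianReal (a * m₁ + b * m₂ + c)
        (⟨a ^ 2, sq_nonneg a⟩ * v₁ + ⟨b ^ 2, sq_nonneg b⟩ * v₂) := by
  have hsum := gaussianReal_add_gaussianReal_of_indepFun
    (hXY.comp (measurable_const_mul a) (measurable_const_mul b))
    (gaussianReal_const_mul (hasLaw_of_map_eq hX) a).map_eq
    (gaussianReal_const_mul (hasLaw_of_map_eq hY) b).map_eq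
  exact (gaussianReal_add_const (hasLaw_of_map_eq hsum) c).map_eq

theorem ddpm_two_step_collapse_general {Ω : Type*} [MeasurableSpace Ω]
    (P : Measure Ω)
    (ε₁ ε₂ : Ω → ℝ)
    (hlaw₁ : Measure.map ε₁ P = gaussianReal 0 1)
    (hlaw₂ : Measure.map ε₂ P = gaussianReal 0 1)
    (hindep : IndepFun ε₁ ε₂ P)
    (αk αk' : ℝ) (hαk : 0 < αk ∧ αk ≤ 1) (hαk' : 0 < αk' ∧ αk' ≤ 1)
    (y : ℝ) :
    Measure.map
      (fun ω => Real.sqrt αk * (Real.sqrt αk' * y + Real.sqrt (1 - αk') * ε₁ ω) +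
        Real.sqrt (1 - αk) * ε₂ ω) P =
    gaussianReal (Real.sqrt (αk * αk') * y) (Real.toNNReal (1 - αk * αk')) := by
  obtain ⟨hk₀, hk₁⟩ := hαk
  obtain ⟨-, hk'₁⟩ := hαk'
  have hlaw := hindep.map_mul_add_mul_add_eq_gaussianReal hlaw₁ hlaw₂
    (Real.sqrt αk * Real.sqrt (1 - αk')) (Real.sqrt (1 - αk)) (Real.sqrt (αk * αk') * y)
  rw [Real.sqrt_mul hk₀.le αk'] at hlaw ⊢
  convert hlaw using 2
  · ext ω
    ring
  · ring
  · rw [← NNReal.coe_inj, Real.coe_toNNReal _ (by nlinarith)]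
    -- the variances are bare `Subtype.mk`s, on which `NNReal.coe_mk` does not fire
    change 1 - αk * αk' = (√αk * √(1 - αk')) ^ 2 * 1 + √(1 - αk) ^ 2 * 1
    rw [mul_pow, Real.sq_sqrt hk₀.le, Real.sq_sqrt (sub_nonneg.2 hk₁),
      Real.sq_sqrt (sub_nonneg.2 hk'₁)]
    ring

/-- **Two Gaussian forward-diffusion steps collapse into one.**
If `ε₁, ε₂` are independent standard real Gaussians, `0 < α_k ≤ 1`, `0 < α_{k−1} ≤ 1`,
then `√(α_k)·(√(α_{k−1})·y + √(1 − α_{k−1})·ε₁) + √(1 − α_k)·ε₂` has law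
`gaussianReal (√(α_k·α_{k−1})·y) (1 − α_k·α_{k−1})`. -/
theorem ddpm_two_step_collapse {Ω : Type*} [MeasurableSpace Ω]
    (P : Measure Ω) [IsProbabilityMeasure P]
    (ε₁ ε₂ : Ω → ℝ) (h₁ : Measurable ε₁) (h₂ : Measurable ε₂)
    (hlaw₁ : Measure.map ε₁ P = gaussianReal 0 1)
    (hlaw₂ : Measure.map ε₂ P = gaussianReal 0 1)
    (hindep : IndepFun ε₁ ε₂ P)
    (αk αk' : ℝ) (hαk : 0 < αk ∧ αk ≤ 1) (hαk' : 0 < αk' ∧ αk' ≤ 1)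
    (y : ℝ) :
    Measure.map
      (fun ω => Real.sqrt αk * (Real.sqrt αk' * y + Real.sqrt (1 - αk') * ε₁ ω) +
        Real.sqrt (1 - αk) * ε₂ ω) P =
    gaussianReal (Real.sqrt (αk * αk') * y) (Real.toNNReal (1 - αk * αk')) :=
  ddpm_two_step_collapse_general P ε₁ ε₂ hlaw₁ hlaw₂ hindep αk αk' hαk hαk' y
end

section
/- Let α, ᾱ' ∈ ℝ with 0 < α < 1 and 0 < ᾱ' < 1, and set ᾱ = α · ᾱ' and β = 1 − α. Fix y_k, y₀ ∈ ℝ and define μ = (√α · (1 − ᾱ') · y_k + √(ᾱ') · β · y₀) / (1 − ᾱ) and σ² = ((1 − ᾱ') · β) / (1 − ᾱ). Then there exists a constant C > 0, not depending on y, such that for every y ∈ ℝ: gaussianPDFReal (√α · y) β y_k · gaussianPDFReal (√(ᾱ') · y₀) (1 − ᾱ') y = C · gaussianPDFReal μ σ² y. That is, the product of the Gaussian forward-transition density (as a function of the previous state y) and the Gaussian marginal density of y is proportional to a Gaussian density in y with the stated posterior mean μ and variance σ². (Closed form of the DDPM reverse-process posterior.) -/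
open ProbabilityTheory

/-- **Closed form of the DDPM reverse-process posterior.**
With `0 < α < 1`, `0 < ᾱ' < 1`, `ᾱ = α·ᾱ'`, `β = 1 − α`, the product of the Gaussian
forward-transition density (as a function of the previous state `y`) and the Gaussian
marginal density of `y` is proportional to a Gaussian density in `y` with posterior mean
`μ = (√α·(1 − ᾱ')·y_k + √(ᾱ')·β·y₀)/(1 − ᾱ)` and variance `σ² = ((1 − ᾱ')·β)/(1 − ᾱ)`,
with a proportionality constant `C > 0` independent of `y`. -/
theorem ddpm_reverse_posterior (α ᾱ' : ℝ) (hα : 0 < α ∧ α < 1) (hᾱ' : 0 < ᾱ' ∧ ᾱ' < 1)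
    (y_k y₀ : ℝ) :
    ∃ C : ℝ, 0 < C ∧ ∀ y : ℝ,
      gaussianPDFReal (Real.sqrt α * y) (Real.toNNReal (1 - α)) y_k *
        gaussianPDFReal (Real.sqrt ᾱ' * y₀) (Real.toNNReal (1 - ᾱ')) y =
      C * gaussianPDFReal
        ((Real.sqrt α * (1 - ᾱ') * y_k + Real.sqrt ᾱ' * (1 - α) * y₀) / (1 - α * ᾱ'))
        (Real.toNNReal (((1 - ᾱ') * (1 - α)) / (1 - α * ᾱ'))) y := by
  obtain ⟨hα0, hα1⟩ := hα
  obtain ⟨hᾱ0, hᾱ1⟩ := hᾱ'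
  have ha2 : Real.sqrt α ^ 2 = α := Real.sq_sqrt hα0.le
  have hs2 : Real.sqrt ᾱ' ^ 2 = ᾱ' := Real.sq_sqrt hᾱ0.le
  set a : ℝ := Real.sqrt α with hA
  set s : ℝ := Real.sqrt ᾱ' with hS
  rw [← ha2, ← hs2]
  have hβ : (0:ℝ) < 1 - a ^ 2 := by rw [ha2]; linarith
  have hb : (0:ℝ) < 1 - s ^ 2 := by rw [hs2]; linarith
  have hd : (0:ℝ) < 1 - a ^ 2 * s ^ 2 := by
    rw [ha2, hs2]; nlinarith
  have hσ : (0:ℝ) < (1 - s ^ 2) * (1 - a ^ 2) / (1 - a ^ 2 * s ^ 2) := by positivity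
  set μ : ℝ := (a * (1 - s ^ 2) * y_k + s * (1 - a ^ 2) * y₀) / (1 - a ^ 2 * s ^ 2) with hμ
  set σ2 : ℝ := (1 - s ^ 2) * (1 - a ^ 2) / (1 - a ^ 2 * s ^ 2) with hσ2
  set K : ℝ := μ ^ 2 / (2 * σ2) - y_k ^ 2 / (2 * (1 - a ^ 2))
      - s ^ 2 * y₀ ^ 2 / (2 * (1 - s ^ 2)) with hK
  refine ⟨Real.sqrt (2 * Real.pi * σ2) * (Real.sqrt (2 * Real.pi * (1 - a ^ 2)))⁻¹ *
    (Real.sqrt (2 * Real.pi * (1 - s ^ 2)))⁻¹ * Real.exp K, by positivity, fun y => ?_⟩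
  have hcoeβ : ((Real.toNNReal (1 - a ^ 2) : ℝ)) = 1 - a ^ 2 :=
    Real.coe_toNNReal _ hβ.le
  have hcoeb : ((Real.toNNReal (1 - s ^ 2) : ℝ)) = 1 - s ^ 2 :=
    Real.coe_toNNReal _ hb.le
  have hcoeσ : ((Real.toNNReal σ2 : ℝ)) = σ2 := Real.coe_toNNReal _ hσ.le
  simp only [gaussianPDFReal, hcoeβ, hcoeb, hcoeσ]
  have hexp : -(y_k - a * y) ^ 2 / (2 * (1 - a ^ 2)) + -(y - s * y₀) ^ 2 / (2 * (1 - s ^ 2))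
      = K + -(y - μ) ^ 2 / (2 * σ2) := by
    rw [hK, hμ, hσ2]
    field_simp
    ring
  calc (Real.sqrt (2 * Real.pi * (1 - a ^ 2)))⁻¹ *
        Real.exp (-(y_k - a * y) ^ 2 / (2 * (1 - a ^ 2))) *
        ((Real.sqrt (2 * Real.pi * (1 - s ^ 2)))⁻¹ *
          Real.exp (-(y - s * y₀) ^ 2 / (2 * (1 - s ^ 2))))
      = (Real.sqrt (2 * Real.pi * (1 - a ^ 2)))⁻¹ * (Real.sqrt (2 * Real.pi * (1 - s ^ 2)))⁻¹ *
        Real.exp (-(y_k - a * y) ^ 2 / (2 * (1 - a ^ 2))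
          + -(y - s * y₀) ^ 2 / (2 * (1 - s ^ 2))) := by
        rw [Real.exp_add]; ring
    _ = _ := by
        rw [hexp, Real.exp_add]
        have h3 : Real.sqrt (2 * Real.pi * σ2) ≠ 0 := by positivity
        field_simp
end
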